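/- Fix $\tau > 0$, $\nu > 0$ and $\bar\theta > 0$, and let $f^+ : \mathbb{R}_{\geq 0} \to \mathbb{R}_{\geq 0}$ be an integrable function vanishing outside $[0, \bar\theta]$, with cumulative function $F^+(\theta) = \int_0^\theta f^+(\zeta)\,d\zeta$. Then there exists a locally integrable function $f^- : \mathbb{R}_{\geq 0} \to \mathbb{R}_{\geq 0}$, unique up to equality almost everywhere, such that, writing $F^-(\theta) = \int_0^\theta f^-(\zeta)\,d\zeta$, $q(\theta) = F^+(\theta) - F^-(\theta + \tau)$ and $T(\theta) = \theta + \tau + q(\theta)/\nu$, the following hold: (i) $f^-(\theta + \tau) \leq \nu$ for almost all $\theta \geq 0$; (ii) $F^-(\theta + \tau) \leq F^+(\theta)$ for all $\theta \geq 0$; (iii) $F^-(T(\theta)) = F^+(\theta)$ for all $\theta \geq 0$. -/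

import Mathlib

/-!
Feasibility forces `F⁻(θ + τ) = G(θ)` for `θ ≥ 0`, where
`G(θ) = min_{ξ ∈ [0, θ]} F⁺(ξ) + ν (θ - ξ)` is the cumulative outflow of a point queue served
at rate `ν`. Indeed, `H(θ) = F⁻(θ + τ)` grows at rate at most `ν` and stays below `F⁺`, which
gives `H ≤ G`. Conversely `H(θ) - ν θ` is antitone and, by the transfer equation, constant
between the entry and exit times of each particle; following these plateaus back from `θ`
reaches a time `m` at which the queue is empty, so `H(θ) = F⁺(m) + ν (θ - m) ≥ G(θ)`.
Feasible outflow rates therefore have the same primitive on `[0, ∞)` and agree a.e. by the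
Lebesgue differentiation theorem. For existence, `s ↦ G(s - τ)` is monotone and `ν`-Lipschitz,
hence the integral of its derivative, which is a feasible rate.
-/

open MeasureTheory intervalIntegral

/-- `VickreyOutflow τ ν fp fm` states that `fm` is a feasible edge outflow rate
for the inflow rate `fp` on an edge with transit time `τ` and capacity `ν`:
`fm` is nonnegative and locally integrable on `ℝ≥0`, the outflow respects the
capacity (i), weak flow conservation holds (ii), and the link transfer
equation holds (iii); here `F⁺(θ) = ∫_0^θ fp`, `F⁻(θ) = ∫_0^θ fm`,
`q(θ) = F⁺(θ) - F⁻(θ+τ)` and `T(θ) = θ + τ + q(θ)/ν`. -/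
def VickreyOutflow (τ ν : ℝ) (fp fm : ℝ → ℝ) : Prop :=
  (∀ θ ≥ (0:ℝ), 0 ≤ fm θ) ∧
  LocallyIntegrableOn fm (Set.Ici (0:ℝ)) ∧
  (∀ᵐ θ ∂(volume.restrict (Set.Ici (0:ℝ))), fm (θ + τ) ≤ ν) ∧
  (∀ θ ≥ (0:ℝ), (∫ ζ in (0:ℝ)..(θ + τ), fm ζ) ≤ ∫ ζ in (0:ℝ)..θ, fp ζ) ∧
  (∀ θ ≥ (0:ℝ),
    (∫ ζ in (0:ℝ)..(θ + τ +
        ((∫ ζ in (0:ℝ)..θ, fp ζ) - ∫ ζ in (0:ℝ)..(θ + τ), fm ζ) / ν), fm ζ)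
      = ∫ ζ in (0:ℝ)..θ, fp ζ)

open Set Filter Topology Function

theorem MonotoneOn.lipschitzOnWith_of_le_add_mul {f : ℝ → ℝ} {s : Set ℝ} {K : NNReal}
    (hf : MonotoneOn f s) (h : ∀ a ∈ s, ∀ b ∈ s, a ≤ b → f b ≤ f a + K * (b - a)) :
    LipschitzOnWith K f s := by
  refine LipschitzOnWith.of_le_add_mul K fun x hx y hy => ?_
  rcases le_total x y with hxy | hyx
  · exact (hf hx hy hxy).trans (le_add_of_nonneg_right (by positivity))
  · simpa [Real.dist_eq, abs_of_nonneg (sub_nonneg.2 hyx)] using h y hy x hx hyx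

theorem MeasureTheory.LocallyIntegrableOn.intervalIntegrable_of_Ici {f : ℝ → ℝ} {c a b : ℝ}
    (hf : LocallyIntegrableOn f (Ici c)) (ha : c ≤ a) (hb : c ≤ b) :
    IntervalIntegrable f volume a b := by
  rw [intervalIntegrable_iff']
  exact hf.integrableOn_compact_subset (fun _ hx => (le_min ha hb).trans hx.1) isCompact_uIcc

theorem MeasureTheory.LocallyIntegrable.intervalIntegrable {f : ℝ → ℝ}
    (hf : LocallyIntegrable f) (a b : ℝ) : IntervalIntegrable f volume a b := by
  rw [intervalIntegrable_iff']
  exact hf.integrableOn_isCompact isCompact_uIcc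

theorem intervalIntegral_mono_upper {f : ℝ → ℝ} {c a b : ℝ} (hab : a ≤ b)
    (hca : IntervalIntegrable f volume c a) (hf : IntervalIntegrable f volume a b)
    (hf_nonneg : ∀ x ∈ Icc a b, 0 ≤ f x) :
    ∫ x in c..a, f x ≤ ∫ x in c..b, f x := by
  rw [← integral_add_adjacent_intervals hca hf]
  exact le_add_of_nonneg_right (integral_nonneg hab hf_nonneg)

theorem ae_eq_restrict_Ici_of_integral_eq {f g : ℝ → ℝ} {a : ℝ}
    (hf : LocallyIntegrableOn f (Ici a)) (hg : LocallyIntegrableOn g (Ici a))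
    (hfg : ∀ s, a ≤ s → ∫ x in a..s, f x = ∫ x in a..s, g x) :
    f =ᵐ[volume.restrict (Ici a)] g := by
  have hderiv {φ : ℝ → ℝ} (hφ : LocallyIntegrableOn φ (Ici a) volume) : ∀ᵐ x, ∀ n : ℕ,
      x ∈ uIcc a (a + n) → HasDerivAt (fun y => ∫ t in a..y, φ t) (φ x) x := by
    refine ae_all_iff.2 fun n => ?_
    filter_upwards [(hφ.intervalIntegrable_of_Ici le_rfl
      (le_add_of_nonneg_right n.cast_nonneg)).ae_hasDerivAt_integral] with x hx hxn
    exact hx hxn a left_mem_uIcc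
  have hne : ∀ᵐ x ∂volume, x ≠ a := by simp [ae_iff, measure_singleton]
  rw [EventuallyEq, ae_restrict_iff' measurableSet_Ici]
  filter_upwards [hderiv hf, hderiv hg, hne] with x hfx hgx hxa hx
  have hax : a < x := lt_of_le_of_ne hx (Ne.symm hxa)
  obtain ⟨n, hn⟩ := exists_nat_ge (x - a)
  have hxn : x ∈ uIcc a (a + n) := by rw [uIcc_of_le (by linarith)]; constructor <;> linarith
  have heq : (fun y => ∫ t in a..y, f t) =ᶠ[𝓝 x] fun y => ∫ t in a..y, g t :=
    eventually_of_mem (Ioi_mem_nhds hax) fun y hy => hfg y (le_of_lt hy)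
  exact (hfx n hxn).unique ((hgx n hxn).congr_of_eventuallyEq heq)

theorem exists_isFixedPt_of_plateau {h φ : ℝ → ℝ} {θ : ℝ} (hh : ContinuousOn h (Ici 0))
    (h_anti : AntitoneOn h (Ici 0)) (hφ : ContinuousOn φ (Ici 0))
    (hφ_ge : ∀ u, 0 ≤ u → u ≤ φ u)
    (hhφ : ∀ u, 0 ≤ u → h (φ u) = h u) (hφ0 : φ 0 = 0) (hθ : 0 ≤ θ) :
    ∃ m ∈ Icc 0 θ, IsFixedPt φ m ∧ h m = h θ := by
  -- `m` is the left end of the plateau of `h` that ends at `θ`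
  set S := Icc 0 θ ∩ h ⁻¹' {h θ}
  have hS : IsClosed S :=
    (hh.mono Icc_subset_Ici_self).preimage_isClosed_of_isClosed isClosed_Icc isClosed_singleton
  have hSbdd : BddBelow S := ⟨0, fun _ hx => hx.1.1⟩
  obtain ⟨⟨hm0, hmθ⟩, hhm⟩ : sInf S ∈ S :=
    hS.csInf_mem ⟨θ, ⟨hθ, le_rfl⟩, rfl⟩ hSbdd
  set m := sInf S
  refine ⟨m, ⟨hm0, hmθ⟩, ?_, hhm⟩
  by_contra hne
  have hm_lt : m < φ m := lt_of_le_of_ne (hφ_ge m hm0) (Ne.symm hne)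
  have hm_pos : 0 < m := lt_of_le_of_ne hm0 fun h0 => hne (h0 ▸ hφ0)
  -- by continuity of `φ` the plateau through `m` reaches slightly to the left of `m`
  have hnear : ∀ᶠ u in 𝓝[<] m, (m < φ u ∧ 0 < u) ∧ u < m :=
    ((((hφ.continuousAt (Ici_mem_nhds hm_pos)).eventually (eventually_gt_nhds hm_lt)).and
      (eventually_gt_nhds hm_pos)).filter_mono nhdsWithin_le_nhds).and self_mem_nhdsWithin
  obtain ⟨u, ⟨hmu, hu0⟩, hum⟩ := hnear.exists
  have hu : h u = h θ := by
    have := h_anti hu0.le hm0 hum.le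
    have := h_anti hm0 (hu0.le.trans (hφ_ge u hu0.le)) hmu.le
    linarith [hhφ u hu0.le, show h m = h θ from hhm]
  exact absurd (csInf_le hSbdd ⟨⟨hu0.le, hum.le.trans hmθ⟩, hu⟩) (not_le.2 hum)

/-- The cumulative outflow of a point queue with service rate `ν` and cumulative inflow `F`
(the Skorokhod reflection of `F`). Only meaningful for `θ ≥ 0`: for `θ < 0` it is the junk
value `sInf ∅ = 0`. -/
noncomputable def pointQueueOutflow (ν : ℝ) (F : ℝ → ℝ) (θ : ℝ) : ℝ :=
  sInf ((fun ξ => F ξ + ν * (θ - ξ)) '' Icc 0 θ)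

section PointQueue

variable {ν : ℝ} {F : ℝ → ℝ} {θ : ℝ}

theorem pointQueueOutflow_le (hF : Continuous F) {ξ : ℝ} (hξ : ξ ∈ Icc 0 θ) :
    pointQueueOutflow ν F θ ≤ F ξ + ν * (θ - ξ) :=
  csInf_le (isCompact_Icc.bddBelow_image (by fun_prop)) (mem_image_of_mem _ hξ)

theorem le_pointQueueOutflow (hθ : 0 ≤ θ) {c : ℝ} (h : ∀ ξ ∈ Icc 0 θ, c ≤ F ξ + ν * (θ - ξ)) :
    c ≤ pointQueueOutflow ν F θ :=
  le_csInf ((nonempty_Icc.2 hθ).image _) (forall_mem_image.2 h)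

theorem exists_pointQueueOutflow_eq (hF : Continuous F) (hθ : 0 ≤ θ) :
    ∃ ξ ∈ Icc 0 θ, F ξ + ν * (θ - ξ) = pointQueueOutflow ν F θ :=
  (isCompact_Icc.image (by fun_prop)).sInf_mem ((nonempty_Icc.2 hθ).image _)

theorem pointQueueOutflow_le_self (hF : Continuous F) (hθ : 0 ≤ θ) :
    pointQueueOutflow ν F θ ≤ F θ := by
  simpa using pointQueueOutflow_le (ν := ν) hF ⟨hθ, le_rfl⟩

theorem pointQueueOutflow_zero (hF : Continuous F) : pointQueueOutflow ν F 0 = F 0 := by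
  refine le_antisymm (pointQueueOutflow_le_self hF le_rfl) (le_pointQueueOutflow le_rfl ?_)
  rintro ξ ⟨h0, h1⟩
  simp [le_antisymm h1 h0]

theorem pointQueueOutflow_monotoneOn (hF : Continuous F) (hFm : Monotone F) (hν : 0 ≤ ν) :
    MonotoneOn (pointQueueOutflow ν F) (Ici 0) := by
  intro a ha b _ hab
  refine le_pointQueueOutflow (ha.trans hab) fun ξ ⟨h0, hξb⟩ => ?_
  rcases le_total ξ a with hξa | haξ
  · calc pointQueueOutflow ν F a ≤ F ξ + ν * (a - ξ) := pointQueueOutflow_le hF ⟨h0, hξa⟩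
      _ ≤ F ξ + ν * (b - ξ) := by gcongr
  · calc pointQueueOutflow ν F a ≤ F a := pointQueueOutflow_le_self hF ha
      _ ≤ F ξ + ν * (b - ξ) := le_add_of_le_of_nonneg (hFm haξ) (mul_nonneg hν (by linarith))

theorem pointQueueOutflow_le_add (hF : Continuous F) {a b : ℝ} (ha : 0 ≤ a) (hab : a ≤ b) :
    pointQueueOutflow ν F b ≤ pointQueueOutflow ν F a + ν * (b - a) := by
  obtain ⟨ξ, ⟨h0, hξa⟩, hξ⟩ := exists_pointQueueOutflow_eq (ν := ν) hF ha
  calc pointQueueOutflow ν F b ≤ F ξ + ν * (b - ξ) :=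
        pointQueueOutflow_le hF ⟨h0, hξa.trans hab⟩
    _ = pointQueueOutflow ν F a + ν * (b - a) := by rw [← hξ]; ring

theorem pointQueueOutflow_lipschitzOnWith (hF : Continuous F) (hFm : Monotone F)
    (hν : 0 ≤ ν) :
    LipschitzOnWith (Real.toNNReal ν) (pointQueueOutflow ν F) (Ici 0) :=
  (pointQueueOutflow_monotoneOn hF hFm hν).lipschitzOnWith_of_le_add_mul fun _ ha _ _ hab => by
    simpa [Real.coe_toNNReal _ hν] using pointQueueOutflow_le_add hF ha hab

theorem pointQueueOutflow_transfer (hF : Continuous F) (hFm : Monotone F) (hν : 0 < ν)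
    (hθ : 0 ≤ θ) :
    pointQueueOutflow ν F (θ + (F θ - pointQueueOutflow ν F θ) / ν) = F θ := by
  obtain ⟨ξ₀, ⟨h₀, hξ₀⟩, hG₀⟩ := exists_pointQueueOutflow_eq (ν := ν) hF hθ
  set G := pointQueueOutflow ν F
  have hq : 0 ≤ F θ - G θ := sub_nonneg.2 (pointQueueOutflow_le_self hF hθ)
  have hδ : 0 ≤ (F θ - G θ) / ν := div_nonneg hq hν.le
  have hνδ : ν * ((F θ - G θ) / ν) = F θ - G θ := mul_div_cancel₀ _ hν.ne'
  refine le_antisymm ?_ (le_pointQueueOutflow (by linarith) fun ξ ⟨h0, hξ⟩ => ?_)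
  · calc G (θ + (F θ - G θ) / ν) ≤ F ξ₀ + ν * (θ + (F θ - G θ) / ν - ξ₀) :=
          pointQueueOutflow_le hF ⟨h₀, by linarith⟩
      _ = F θ := by linear_combination hνδ + hG₀
  · rcases le_total ξ θ with hξθ | hθξ
    · have := pointQueueOutflow_le (ν := ν) hF ⟨h0, hξθ⟩
      nlinarith
    · nlinarith [hFm hθξ]

theorem eq_pointQueueOutflow_of_transfer (hF : Continuous F) (hν : 0 < ν) {H : ℝ → ℝ}
    (hH0 : H 0 = F 0) (hHc : ContinuousOn H (Ici 0))
    (hHcap : ∀ a b, 0 ≤ a → a ≤ b → H b ≤ H a + ν * (b - a))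
    (hHle : ∀ θ, 0 ≤ θ → H θ ≤ F θ)
    (hHtr : ∀ θ, 0 ≤ θ → H (θ + (F θ - H θ) / ν) = F θ) (hθ : 0 ≤ θ) :
    H θ = pointQueueOutflow ν F θ := by
  refine le_antisymm (le_pointQueueOutflow hθ fun ξ ⟨h0, hξ⟩ => ?_) ?_
  · linarith [hHcap ξ θ h0 hξ, hHle ξ h0]
  -- `H θ - ν θ` is antitone and constant between the entry and exit time of each particle
  obtain ⟨m, hm, hm_fix, hm_eq⟩ := exists_isFixedPt_of_plateau (θ := θ)
    (h := fun u => H u - ν * u) (φ := fun u => u + (F u - H u) / ν)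
    (hHc.sub (by fun_prop)) (fun a ha b _ hab => by linarith [hHcap a b ha hab])
    (continuousOn_id.add ((hF.continuousOn.sub hHc).div_const ν))
    (fun u hu => le_add_of_nonneg_right (div_nonneg (sub_nonneg.2 (hHle u hu)) hν.le))
    (fun u hu => by rw [hHtr u hu]; field_simp; ring) (by simp [hH0]) hθ
  have hHm : H m = F m := by
    simpa [IsFixedPt, div_eq_zero_iff, hν.ne', sub_eq_zero, eq_comm] using hm_fix
  calc pointQueueOutflow ν F θ ≤ F m + ν * (θ - m) := pointQueueOutflow_le hF hm
    _ = H θ := by linarith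

end PointQueue

/-- The cumulative outflow `F⁻` of the edge: the point queue fed by `F⁺`, delayed by `τ`. -/
noncomputable def vickreyCumulativeOutflow (τ ν : ℝ) (fp : ℝ → ℝ) (s : ℝ) : ℝ :=
  pointQueueOutflow ν (fun θ => ∫ ζ in (0:ℝ)..θ, fp ζ) (max (s - τ) 0)

section Vickrey

variable {τ ν : ℝ} {fp g : ℝ → ℝ}

theorem monotone_primitive_of_nonneg (hfp_nonneg : ∀ θ, 0 ≤ fp θ) (hfp : LocallyIntegrable fp) :
    Monotone fun θ => ∫ ζ in (0:ℝ)..θ, fp ζ := fun _ _ hab =>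
  intervalIntegral_mono_upper hab (hfp.intervalIntegrable _ _) (hfp.intervalIntegrable _ _)
    fun x _ => hfp_nonneg x

theorem vickreyCumulativeOutflow_add (θ : ℝ) (hθ : 0 ≤ θ) :
    vickreyCumulativeOutflow τ ν fp (θ + τ) =
      pointQueueOutflow ν (fun θ => ∫ ζ in (0:ℝ)..θ, fp ζ) θ := by
  rw [vickreyCumulativeOutflow, add_sub_cancel_right, max_eq_left hθ]

theorem vickreyCumulativeOutflow_of_le (hfp : LocallyIntegrable fp) {s : ℝ} (hs : s ≤ τ) :
    vickreyCumulativeOutflow τ ν fp s = 0 := by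
  rw [vickreyCumulativeOutflow, max_eq_right (by linarith),
    pointQueueOutflow_zero (continuous_primitive hfp.intervalIntegrable 0), integral_same]

theorem monotone_vickreyCumulativeOutflow (hν : 0 ≤ ν) (hfp_nonneg : ∀ θ, 0 ≤ fp θ)
    (hfp : LocallyIntegrable fp) : Monotone (vickreyCumulativeOutflow τ ν fp) := fun _ _ hab =>
  pointQueueOutflow_monotoneOn (continuous_primitive hfp.intervalIntegrable 0)
    (monotone_primitive_of_nonneg hfp_nonneg hfp) hν (mem_Ici.2 (le_max_right _ _))
    (mem_Ici.2 (le_max_right _ _)) (max_le_max (by linarith) le_rfl)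

theorem lipschitzWith_vickreyCumulativeOutflow (hν : 0 ≤ ν) (hfp_nonneg : ∀ θ, 0 ≤ fp θ)
    (hfp : LocallyIntegrable fp) :
    LipschitzWith (Real.toNNReal ν) (vickreyCumulativeOutflow τ ν fp) := by
  unfold vickreyCumulativeOutflow
  have := (pointQueueOutflow_lipschitzOnWith (continuous_primitive hfp.intervalIntegrable 0)
    (monotone_primitive_of_nonneg hfp_nonneg hfp) hν).comp
      ((IsometryEquiv.subRight τ).isometry.lipschitz.max_const 0).lipschitzOnWith
      (s := univ) fun _ _ => mem_Ici.2 (le_max_right _ _)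
  simpa [Function.comp_def] using this

theorem integral_deriv_vickreyCumulativeOutflow (hτ : 0 ≤ τ) (hν : 0 ≤ ν)
    (hfp_nonneg : ∀ θ, 0 ≤ fp θ) (hfp : LocallyIntegrable fp) (s : ℝ) :
    ∫ ζ in (0:ℝ)..s, deriv (vickreyCumulativeOutflow τ ν fp) ζ =
      vickreyCumulativeOutflow τ ν fp s := by
  rw [(lipschitzWith_vickreyCumulativeOutflow hν hfp_nonneg hfp).lipschitzOnWith
    |>.absolutelyContinuousOnInterval.integral_deriv_eq_sub, vickreyCumulativeOutflow_of_le hfp hτ,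
    sub_zero]

theorem vickreyOutflow_deriv (hτ : 0 ≤ τ) (hν : 0 < ν) (hfp_nonneg : ∀ θ, 0 ≤ fp θ)
    (hfp : LocallyIntegrable fp) :
    VickreyOutflow τ ν fp (deriv (vickreyCumulativeOutflow τ ν fp)) := by
  have hF := continuous_primitive hfp.intervalIntegrable 0
  have hcap (s : ℝ) : |deriv (vickreyCumulativeOutflow τ ν fp) s| ≤ ν := by
    simpa [Real.coe_toNNReal _ hν.le] using
      norm_deriv_le_of_lipschitz (lipschitzWith_vickreyCumulativeOutflow hν.le hfp_nonneg hfp)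
  have hint := integral_deriv_vickreyCumulativeOutflow hτ hν.le hfp_nonneg hfp
  refine ⟨fun _ _ => (monotone_vickreyCumulativeOutflow hν.le hfp_nonneg hfp).deriv_nonneg,
    ?_, ae_of_all _ fun θ => (le_abs_self _).trans (hcap _), fun θ hθ => ?_, fun θ hθ => ?_⟩
  · refine ((locallyIntegrable_const ν).mono (measurable_deriv _).aestronglyMeasurable
      (ae_of_all _ fun s => ?_)).locallyIntegrableOn _
    simpa [abs_of_pos hν] using hcap s
  · rw [hint, vickreyCumulativeOutflow_add θ hθ]
    exact pointQueueOutflow_le_self hF hθ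
  · have hq := sub_nonneg.2 (pointQueueOutflow_le_self (ν := ν) hF hθ)
    rw [hint, hint, vickreyCumulativeOutflow_add θ hθ, add_right_comm,
      vickreyCumulativeOutflow_add _ (add_nonneg hθ (div_nonneg hq hν.le)),
      pointQueueOutflow_transfer hF (monotone_primitive_of_nonneg hfp_nonneg hfp) hν hθ]

theorem VickreyOutflow.monotoneOn_primitive (hg : VickreyOutflow τ ν fp g) :
    MonotoneOn (fun s => ∫ ζ in (0:ℝ)..s, g ζ) (Ici 0) := fun _ ha _ _ hab =>
  intervalIntegral_mono_upper hab (hg.2.1.intervalIntegrable_of_Ici le_rfl ha)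
    (hg.2.1.intervalIntegrable_of_Ici ha (ha.trans hab)) fun x hx => hg.1 x (ha.trans hx.1)

theorem VickreyOutflow.integral_add_le (hτ : 0 ≤ τ) (hg : VickreyOutflow τ ν fp g) {a b : ℝ}
    (ha : 0 ≤ a) (hab : a ≤ b) :
    ∫ ζ in (0:ℝ)..(b + τ), g ζ ≤ (∫ ζ in (0:ℝ)..(a + τ), g ζ) + ν * (b - a) := by
  obtain ⟨-, hgloc, hcap, -⟩ := hg
  have hii := hgloc.intervalIntegrable_of_Ici (add_nonneg ha hτ) (by linarith : (0:ℝ) ≤ b + τ)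
  rw [← integral_add_adjacent_intervals (hgloc.intervalIntegrable_of_Ici le_rfl (by linarith)) hii,
    ← integral_comp_add_right]
  gcongr
  calc ∫ ζ in a..b, g (ζ + τ) ≤ ∫ _ in a..b, ν :=
        integral_mono_ae_restrict hab (by simpa using hii.comp_add_right τ) intervalIntegrable_const
          (ae_restrict_of_ae_restrict_of_subset (fun _ hx => ha.trans hx.1) hcap)
    _ = ν * (b - a) := by simp [mul_comm]

theorem VickreyOutflow.integral_eq_zero (hτ : 0 ≤ τ) (hg : VickreyOutflow τ ν fp g) {s : ℝ}
    (hs0 : 0 ≤ s) (hsτ : s ≤ τ) : ∫ ζ in (0:ℝ)..s, g ζ = 0 := by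
  have hτ0 : ∫ ζ in (0:ℝ)..τ, g ζ ≤ 0 := by simpa using hg.2.2.2.1 0 le_rfl
  have h0s := hg.monotoneOn_primitive self_mem_Ici hs0 hs0
  have hsτ' := hg.monotoneOn_primitive hs0 hτ hsτ
  simp only [integral_same] at h0s hsτ'
  linarith

theorem VickreyOutflow.integral_add_eq (hτ : 0 ≤ τ) (hν : 0 < ν) (hfp : LocallyIntegrable fp)
    (hg : VickreyOutflow τ ν fp g) {θ : ℝ} (hθ : 0 ≤ θ) :
    ∫ ζ in (0:ℝ)..(θ + τ), g ζ = pointQueueOutflow ν (fun θ => ∫ ζ in (0:ℝ)..θ, fp ζ) θ := by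
  obtain ⟨-, -, -, hcons, htr⟩ := id hg
  have hmono : MonotoneOn (fun θ => ∫ ζ in (0:ℝ)..(θ + τ), g ζ) (Ici 0) := fun a ha b hb hab =>
    hg.monotoneOn_primitive (add_nonneg ha hτ) (add_nonneg hb hτ) (by linarith)
  have hlip := hmono.lipschitzOnWith_of_le_add_mul (K := ν.toNNReal) fun a ha _ _ hab => by
    simpa [Real.coe_toNNReal _ hν.le] using hg.integral_add_le hτ ha hab
  refine eq_pointQueueOutflow_of_transfer (continuous_primitive hfp.intervalIntegrable 0) hν
    ?_ hlip.continuousOn (fun a b ha hab => hg.integral_add_le hτ ha hab) hcons (fun t ht => ?_) hθ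
  · simpa using hg.integral_eq_zero hτ hτ le_rfl
  · convert htr t ht using 2
    ring

theorem VickreyOutflow.integral_eq (hτ : 0 ≤ τ) (hν : 0 < ν) (hfp : LocallyIntegrable fp)
    (hg : VickreyOutflow τ ν fp g) {s : ℝ} (hs : 0 ≤ s) :
    ∫ ζ in (0:ℝ)..s, g ζ = vickreyCumulativeOutflow τ ν fp s := by
  rcases le_total s τ with hsτ | hτs
  · rw [vickreyCumulativeOutflow_of_le hfp hsτ, hg.integral_eq_zero hτ hs hsτ]
  · rw [← sub_add_cancel s τ, vickreyCumulativeOutflow_add _ (sub_nonneg.2 hτs),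
      hg.integral_add_eq hτ hν hfp (sub_nonneg.2 hτs)]

end Vickrey

theorem existsUnique_vickrey_outflow_general
    (τ ν : ℝ) (hτ : 0 < τ) (hν : 0 < ν)
    (fp : ℝ → ℝ) (hfp_nonneg : ∀ θ, 0 ≤ fp θ)
    (hfp_int : Integrable fp) :
    ∃ fm : ℝ → ℝ, VickreyOutflow τ ν fp fm ∧
      ∀ g : ℝ → ℝ, VickreyOutflow τ ν fp g →
        g =ᵐ[volume.restrict (Set.Ici (0:ℝ))] fm := by
  have hfp := hfp_int.locallyIntegrable
  have hfm := vickreyOutflow_deriv hτ.le hν hfp_nonneg hfp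
  refine ⟨_, hfm, fun g hg => ae_eq_restrict_Ici_of_integral_eq hg.2.1 hfm.2.1 fun s hs => ?_⟩
  rw [hg.integral_eq hτ.le hν hfp hs, hfm.integral_eq hτ.le hν hfp hs]

/-- Existence and a.e.-uniqueness of the Vickrey edge outflow rate associated
with an integrable, nonnegative inflow rate supported in `[0, θ̄]`. -/
theorem existsUnique_vickrey_outflow
    (τ ν θbar : ℝ) (hτ : 0 < τ) (hν : 0 < ν) (hθbar : 0 < θbar)
    (fp : ℝ → ℝ) (hfp_nonneg : ∀ θ, 0 ≤ fp θ)
    (hfp_int : Integrable fp)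
    (hfp_supp : ∀ θ, θ ∉ Set.Icc (0:ℝ) θbar → fp θ = 0) :
    ∃ fm : ℝ → ℝ, VickreyOutflow τ ν fp fm ∧
      ∀ g : ℝ → ℝ, VickreyOutflow τ ν fp g →
        g =ᵐ[volume.restrict (Set.Ici (0:ℝ))] fm :=
  existsUnique_vickrey_outflow_general τ ν hτ hν fp hfp_nonneg hfp_int
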